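/- arXiv:1705.01019 — 8 statements merged into one kernel-verified Lean document; each statement's English description precedes it below -/
import Mathlib

section
/- Let I be a convergence ideal on a Boolean algebra B. The sequential topology induced by I (a set A is closed iff it contains all I-limits of sequences from A) is Fréchet (the closure of each set equals the set of limits of its sequences) if and only if I has the diagonal property: whenever lim_n x^k_n = 0 for all k, there exists F : ℕ → ℕ such that lim_k x^k_{F(k)} = 0. -/
open Filter Topology

variable {α : Type*}

/-- A convergence ideal on a Boolean algebra: a set of infinite sequences
(i) with no nonzero common lower bound, (ii) closed under subsequences,
(iii) closed under minorization, (iv) closed under pairwise joins, and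
(v) containing every infinite antichain (sequence of pairwise disjoint nonzero elements). -/
def IsConvIdeal [BooleanAlgebra α] (I : Set (ℕ → α)) : Prop :=
  (∀ a ∈ I, ∀ b : α, (∀ n, b ≤ a n) → b = ⊥) ∧
  (∀ a ∈ I, ∀ φ : ℕ → ℕ, StrictMono φ → (fun n => a (φ n)) ∈ I) ∧
  (∀ a ∈ I, ∀ b : ℕ → α, (∀ n, b n ≤ a n) → b ∈ I) ∧
  (∀ a ∈ I, ∀ b ∈ I, (fun n => a n ⊔ b n) ∈ I) ∧
  (∀ a : ℕ → α, (∀ n, a n ≠ ⊥) → (∀ i j, i ≠ j → a i ⊓ a j = ⊥) → a ∈ I)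

/-- `ConvTo I a c` : the sequence `a` converges to `c`, i.e. `{a n ∆ c} ∈ I`. -/
def ConvTo [BooleanAlgebra α] (I : Set (ℕ → α)) (a : ℕ → α) (c : α) : Prop :=
  (fun n => symmDiff (a n) c) ∈ I

/-- A set is sequentially closed if it contains all `I`-limits of its sequences. -/
def SeqClosed [BooleanAlgebra α] (I : Set (ℕ → α)) (A : Set α) : Prop :=
  ∀ x : ℕ → α, (∀ n, x n ∈ A) → ∀ c : α, ConvTo I x c → c ∈ A

/-- The set of `I`-limits of sequences from `A`. -/
def seqLim [BooleanAlgebra α] (I : Set (ℕ → α)) (A : Set α) : Set α :=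
  {c | ∃ x : ℕ → α, (∀ n, x n ∈ A) ∧ ConvTo I x c}

/-- Closure of `A` in the sequential topology: the least sequentially closed superset. -/
def seqTopClosure [BooleanAlgebra α] (I : Set (ℕ → α)) (A : Set α) : Set α :=
  ⋂₀ {B : Set α | A ⊆ B ∧ SeqClosed I B}

/-!
If `I` has the diagonal property, the set of `I`-limits of sequences from `A` is already
sequentially closed: a limit of limits is the limit of a diagonal sequence, by the triangle
inequality for `∆`. Conversely, given `x k ∈ I`, put `X k = x 0 ⊔ ⋯ ⊔ x k` and fix an antichain
`a ∈ I` (it exists because `α` is atomless). Each `a k` is the limit of `a k ⊔ X k n` and `a` tends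
to `⊥`, so the Fréchet property yields a sequence `a (K m) ⊔ X (K m) (N m)` in `I`. As no nonzero
element bounds a sequence of `I` from below, `K m → ∞`, and along a subsequence with `K m ≥ j`
the indices `N m` form the required diagonal.
-/

open Function

theorem exists_pairwise_disjoint_ne_bot [BooleanAlgebra α] (hnt : (⊥ : α) ≠ ⊤)
    (hatomless : ∀ a : α, a ≠ ⊥ → ∃ b, b ≠ ⊥ ∧ b < a) :
    ∃ a : ℕ → α, (∀ k, a k ≠ ⊥) ∧ Pairwise (Disjoint on a) := by
  choose piece piece_ne_bot piece_lt using fun c : {c : α // c ≠ ⊥} => hatomless c c.2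
  let rest (c : {c : α // c ≠ ⊥}) : {c : α // c ≠ ⊥} :=
    ⟨c \ piece c, fun h => (piece_lt c).not_ge (sdiff_eq_bot_iff.mp h)⟩
  let s (k : ℕ) : {c : α // c ≠ ⊥} := rest^[k] ⟨⊤, hnt.symm⟩
  have s_succ (k : ℕ) : (s (k + 1) : α) = (s k : α) \ piece (s k) := by
    simp only [s, iterate_succ_apply']; rfl
  have s_anti : Antitone fun k => (s k : α) :=
    antitone_nat_of_succ_le fun k => s_succ k ▸ sdiff_le
  refine ⟨fun k => piece (s k), fun k => piece_ne_bot _,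
    (pairwise_disjoint_on _).2 fun i j hij => ?_⟩
  have : Disjoint (piece (s i)) (s (i + 1)) := s_succ i ▸ disjoint_sdiff_self_right
  exact this.mono_right ((piece_lt _).le.trans (s_anti hij))

def IsFrechet [BooleanAlgebra α] (I : Set (ℕ → α)) : Prop :=
  ∀ A : Set α, seqTopClosure I A = seqLim I A

def HasDiagonalProperty [BooleanAlgebra α] (I : Set (ℕ → α)) : Prop :=
  ∀ x : ℕ → ℕ → α, (∀ k, x k ∈ I) → ∃ F : ℕ → ℕ, (fun k => x k (F k)) ∈ I

section SequentialClosure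

variable [BooleanAlgebra α] {I : Set (ℕ → α)} {A : Set α}

theorem convTo_bot_iff {x : ℕ → α} : ConvTo I x ⊥ ↔ x ∈ I := by
  simp only [ConvTo, symmDiff_bot]

theorem seqClosed_seqTopClosure : SeqClosed I (seqTopClosure I A) :=
  fun x hx c hc _ hB => hB.2 x (fun n => hx n _ hB) c hc

theorem seqLim_subset_seqTopClosure : seqLim I A ⊆ seqTopClosure I A :=
  fun _ ⟨x, hx, hc⟩ _ hB => hB.2 x (fun n => hB.1 (hx n)) _ hc

theorem seqTopClosure_subset {B : Set α} (hAB : A ⊆ B) (hB : SeqClosed I B) :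
    seqTopClosure I A ⊆ B :=
  fun _ hc => hc B ⟨hAB, hB⟩

theorem subset_seqLim (hbot : (fun _ => ⊥) ∈ I) : A ⊆ seqLim I A :=
  fun c hc => ⟨fun _ => c, fun _ => hc, by simpa only [ConvTo, symmDiff_self] using hbot⟩

theorem isFrechet_iff_forall_seqClosed_seqLim (hbot : (fun _ => ⊥) ∈ I) :
    IsFrechet I ↔ ∀ A : Set α, SeqClosed I (seqLim I A) :=
  ⟨fun hF A => hF A ▸ seqClosed_seqTopClosure, fun h A =>
    (seqTopClosure_subset (subset_seqLim hbot) (h A)).antisymm seqLim_subset_seqTopClosure⟩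

end SequentialClosure

namespace IsConvIdeal

variable [BooleanAlgebra α] {I : Set (ℕ → α)}

theorem const_bot_mem (hI : IsConvIdeal I) {a : ℕ → α} (ha : a ∈ I) : (fun _ => ⊥) ∈ I :=
  hI.2.2.1 a ha _ fun _ => bot_le

theorem finsetSup_mem {ι : Type*} (hI : IsConvIdeal I) (hbot : (fun _ => ⊥) ∈ I)
    (s : Finset ι) {x : ι → ℕ → α} (hx : ∀ i ∈ s, x i ∈ I) :
    (fun n => s.sup (x · n)) ∈ I := by
  classical
  induction s using Finset.induction_on with
  | empty => simpa only [Finset.sup_empty] using hbot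
  | insert i s _ ih =>
    simp only [Finset.sup_insert]
    exact hI.2.2.2.1 _ (hx i (s.mem_insert_self i)) _
      (ih fun j hj => hx j (Finset.mem_insert_of_mem hj))

theorem convTo_sup (hI : IsConvIdeal I) (c : α) {z : ℕ → α} (hz : z ∈ I) :
    ConvTo I (fun n => c ⊔ z n) c :=
  hI.2.2.1 z hz _ fun _ => symmDiff_le le_rfl (le_sup_left.trans le_sup_left)

theorem seqClosed_seqLim (hI : IsConvIdeal I) (hdiag : HasDiagonalProperty I) (A : Set α) :
    SeqClosed I (seqLim I A) := by
  intro c hcA d hcd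
  choose x hxA hxc using hcA
  obtain ⟨F, hF⟩ := hdiag (fun k n => symmDiff (x k n) (c k)) hxc
  exact ⟨fun k => x k (F k), fun k => hxA k (F k),
    hI.2.2.1 _ (hI.2.2.2.1 _ hF _ hcd) _ fun k => symmDiff_triangle _ _ _⟩

theorem tendsto_atTop_of_le_mem (hI : IsConvIdeal I) {a y : ℕ → α} (ha : ∀ k, a k ≠ ⊥)
    (hy : y ∈ I) {K : ℕ → ℕ} (hK : ∀ m, a (K m) ≤ y m) : Tendsto K atTop atTop := by
  rw [← Nat.cofinite_eq_atTop]
  refine Tendsto.cofinite_of_finite_preimage_singleton fun k => ?_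
  by_contra hinf
  -- Along the infinite fibre over `k`, the subsequence of `y` is bounded below by `a k ≠ ⊥`.
  obtain ⟨φ, hφ, hKφ⟩ := extraction_of_frequently_atTop
    (Nat.frequently_atTop_iff_infinite.2 (Set.not_finite.1 hinf))
  exact ha k (hI.1 _ (hI.2.1 y hy φ hφ) _ fun n => hKφ n ▸ hK (φ n))

theorem hasDiagonalProperty_of_seqClosed_seqLim (hI : IsConvIdeal I) {a : ℕ → α}
    (ha : ∀ k, a k ≠ ⊥) (haI : a ∈ I) (hclosed : ∀ A : Set α, SeqClosed I (seqLim I A)) : HasDiagonalProperty I := by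
  intro x hx
  let X (k : ℕ) (n : ℕ) : α := (Finset.range (k + 1)).sup (x · n)
  have hXI (k : ℕ) : X k ∈ I :=
    hI.finsetSup_mem (hI.const_bot_mem haI) _ fun j _ => hx j
  -- `a k` is the limit of `a k ⊔ X k n`, and `a` tends to `⊥`.
  let A : Set α := {d | ∃ k n, d = a k ⊔ X k n}
  have hbot_lim : ⊥ ∈ seqLim I A :=
    hclosed A a (fun k => ⟨_, fun n => ⟨k, n, rfl⟩, hI.convTo_sup (a k) (hXI k)⟩) ⊥
      (convTo_bot_iff.2 haI)
  obtain ⟨y, hyA, hy⟩ := hbot_lim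
  rw [convTo_bot_iff] at hy
  choose K N hKN using hyA
  have hK : Tendsto K atTop atTop :=
    hI.tendsto_atTop_of_le_mem ha hy fun m => hKN m ▸ le_sup_left
  obtain ⟨φ, hφ, hKφ⟩ := extraction_forall_of_eventually fun j => hK.eventually_ge_atTop j
  refine ⟨fun j => N (φ j), hI.2.2.1 _ (hI.2.1 y hy φ hφ) _ fun j => ?_⟩
  calc x j (N (φ j)) ≤ X (K (φ j)) (N (φ j)) :=
        Finset.le_sup (f := (x · _)) (Finset.mem_range_succ_iff.2 (hKφ j))
    _ ≤ y (φ j) := hKN (φ j) ▸ le_sup_right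

end IsConvIdeal

theorem stmt7 [BooleanAlgebra α] (hnt : (⊥ : α) ≠ ⊤) (hatomless : ∀ a : α, a ≠ ⊥ → ∃ b, b ≠ ⊥ ∧ b < a)
    (I : Set (ℕ → α)) (hI : IsConvIdeal I) :
    (∀ A : Set α, seqTopClosure I A = seqLim I A) ↔
    (∀ x : ℕ → ℕ → α, (∀ k, x k ∈ I) → ∃ F : ℕ → ℕ, (fun k => x k (F k)) ∈ I) := by
  obtain ⟨a, ha, hdisj⟩ := exists_pairwise_disjoint_ne_bot hnt hatomless
  have haI : a ∈ I := hI.2.2.2.2 a ha fun i j hij => (hdisj hij).eq_bot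
  change IsFrechet I ↔ HasDiagonalProperty I
  rw [isFrechet_iff_forall_seqClosed_seqLim (hI.const_bot_mem haI)]
  exact ⟨hI.hasDiagonalProperty_of_seqClosed_seqLim ha haI, hI.seqClosed_seqLim⟩
end

section
/- Let I be a convergence ideal with the diagonal property on a Boolean algebra B. If lim_n a^k_n = b_k for every k and lim_k b_k = c, then there is a function F : ℕ → ℕ such that lim_k a^k_{F(k)} = c. -/
open Filter Topology

variable {α : Type*}

theorem ConvTo.of_symmDiff_mem [BooleanAlgebra α] {I : Set (ℕ → α)} (hI : IsConvIdeal I)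
    {x y : ℕ → α} {c : α} (hxy : (fun n => symmDiff (x n) (y n)) ∈ I) (hy : ConvTo I y c) :
    ConvTo I x c := by
  obtain ⟨-, -, hmin, hjoin, -⟩ := hI
  exact hmin _ (hjoin _ hxy _ hy) _ fun n => symmDiff_triangle _ _ _

theorem stmt8 [BooleanAlgebra α] (I : Set (ℕ → α)) (hI : IsConvIdeal I)
    (hdiag : ∀ x : ℕ → ℕ → α, (∀ k, x k ∈ I) → ∃ F : ℕ → ℕ, (fun k => x k (F k)) ∈ I)
    (a : ℕ → ℕ → α) (b : ℕ → α) (c : α)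
    (hab : ∀ k, ConvTo I (a k) (b k)) (hbc : ConvTo I b c) :
    ∃ F : ℕ → ℕ, ConvTo I (fun k => a k (F k)) c := by
  obtain ⟨F, hF⟩ := hdiag (fun k n => symmDiff (a k n) (b k)) hab
  exact ⟨F, ConvTo.of_symmDiff_mem hI hF hbc⟩
end

section
/- If m is a strictly positive exhaustive submeasure on a Boolean algebra B, then the set I of all sequences {a_n} with lim_n m(a_n) = 0 is a convergence ideal, and the induced sequential topology is uniformly Fréchet, witnessed by choice functions F_k selecting from each sequence in I an element of submeasure < 1/k. -/
open Filter Topology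

variable {α : Type*}

/-- `F k` picks a term of its argument sequence. -/
def IsSelective [BooleanAlgebra α] (F : ℕ → (ℕ → α) → α) : Prop :=
  ∀ k, ∀ x : ℕ → α, ∃ n, F k x = x n

/-- Uniform Fréchet property of a convergence ideal witnessed by choice functions `F`. -/
def UnifFrechet [BooleanAlgebra α] (I : Set (ℕ → α)) (F : ℕ → (ℕ → α) → α) : Prop :=
  ∀ x : ℕ → ℕ → α, (∀ k, x k ∈ I) → (fun k => F k (x k)) ∈ I

/-!
A sequence along which `m` tends to `0` has, for every `k`, a term of submeasure `< 1/(k+1)`;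
choosing such a term from the `k`-th sequence gives a diagonal sequence squeezed between `0`
and `1/(k+1)`, hence again in the ideal. The ideal axioms are squeeze arguments using
monotonicity and subadditivity, strict positivity rules out a nonzero lower bound, and
exhaustivity is exactly the statement that antichains belong to the ideal.
-/

section Vanishing

variable {m : α → ℝ}

def vanishingSeqs (m : α → ℝ) : Set (ℕ → α) :=
  {a | Tendsto (fun n => m (a n)) atTop (𝓝 0)}

lemma exists_lt_of_mem_vanishingSeqs {x : ℕ → α} (hx : x ∈ vanishingSeqs m) (k : ℕ) :
    ∃ n, m (x n) < 1 / (k + 1 : ℝ) :=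
  (hx.eventually (eventually_lt_nhds (by positivity))).exists

open Classical in
noncomputable def smallTerm (m : α → ℝ) (k : ℕ) (x : ℕ → α) : α :=
  if h : ∃ n, m (x n) < 1 / (k + 1 : ℝ) then x h.choose else x 0

lemma smallTerm_lt {x : ℕ → α} (hx : x ∈ vanishingSeqs m) (k : ℕ) :
    m (smallTerm m k x) < 1 / (k + 1 : ℝ) := by
  have h := exists_lt_of_mem_vanishingSeqs hx k
  rw [smallTerm, dif_pos h]
  exact h.choose_spec

end Vanishing

section Submeasure

variable [BooleanAlgebra α] {m : α → ℝ}

lemma nonneg_of_monotone_of_map_bot (h0 : m ⊥ = 0) (hmono : Monotone m) (a : α) : 0 ≤ m a :=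
  h0 ▸ hmono bot_le

lemma mem_vanishingSeqs_of_le (h0 : m ⊥ = 0) (hmono : Monotone m) {a b : ℕ → α}
    (ha : a ∈ vanishingSeqs m) (hba : ∀ n, b n ≤ a n) : b ∈ vanishingSeqs m :=
  squeeze_zero (fun _ => nonneg_of_monotone_of_map_bot h0 hmono _) (fun n => hmono (hba n)) ha

lemma eq_bot_of_forall_le_of_mem_vanishingSeqs (h0 : m ⊥ = 0) (hmono : Monotone m)
    (hpos : ∀ a : α, m a = 0 → a = ⊥) {a : ℕ → α} (ha : a ∈ vanishingSeqs m) {b : α}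
    (hb : ∀ n, b ≤ a n) : b = ⊥ :=
  hpos b <| tendsto_nhds_unique tendsto_const_nhds <|
    mem_vanishingSeqs_of_le (b := fun _ => b) h0 hmono ha hb

lemma sup_mem_vanishingSeqs (h0 : m ⊥ = 0) (hmono : Monotone m)
    (hsub : ∀ a b : α, m (a ⊔ b) ≤ m a + m b) {a b : ℕ → α}
    (ha : a ∈ vanishingSeqs m) (hb : b ∈ vanishingSeqs m) :
    (fun n => a n ⊔ b n) ∈ vanishingSeqs m := by
  have hsum : Tendsto (fun n => m (a n) + m (b n)) atTop (𝓝 0) := by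
    simpa using ha.add hb
  exact squeeze_zero (fun _ => nonneg_of_monotone_of_map_bot h0 hmono _) (fun _ => hsub _ _) hsum

lemma isConvIdeal_vanishingSeqs (h0 : m ⊥ = 0) (hmono : Monotone m)
    (hsub : ∀ a b : α, m (a ⊔ b) ≤ m a + m b) (hpos : ∀ a : α, m a = 0 → a = ⊥)
    (hexh : ∀ a : ℕ → α, (∀ i j, i ≠ j → a i ⊓ a j = ⊥) →
      Tendsto (fun n => m (a n)) atTop (𝓝 0)) :
    IsConvIdeal (vanishingSeqs m) :=
  ⟨fun _ ha _ hb => eq_bot_of_forall_le_of_mem_vanishingSeqs h0 hmono hpos ha hb,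
    fun _ ha _ hφ => ha.comp hφ.tendsto_atTop,
    fun _ ha _ hba => mem_vanishingSeqs_of_le h0 hmono ha hba,
    fun _ ha _ hb => sup_mem_vanishingSeqs h0 hmono hsub ha hb,
    fun a _ hdisj => hexh a hdisj⟩

lemma isSelective_smallTerm (m : α → ℝ) : IsSelective (smallTerm m) := by
  intro k x
  unfold smallTerm
  split_ifs with h
  exacts [⟨h.choose, rfl⟩, ⟨0, rfl⟩]

lemma unifFrechet_smallTerm (h0 : m ⊥ = 0) (hmono : Monotone m) :
    UnifFrechet (vanishingSeqs m) (smallTerm m) := fun x hx =>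
  squeeze_zero (fun _ => nonneg_of_monotone_of_map_bot h0 hmono _)
    (fun k => (smallTerm_lt (hx k) k).le) tendsto_one_div_add_atTop_nhds_zero_nat

end Submeasure

theorem stmt9_general [BooleanAlgebra α] (m : α → ℝ)
    (h0 : m ⊥ = 0)
    (hmono : ∀ a b : α, a ≤ b → m a ≤ m b)
    (hsub : ∀ a b : α, m (a ⊔ b) ≤ m a + m b)
    (hpos : ∀ a : α, m a = 0 → a = ⊥)
    (hexh : ∀ a : ℕ → α, (∀ i j, i ≠ j → a i ⊓ a j = ⊥) →
      Tendsto (fun n => m (a n)) atTop (𝓝 0))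
    (I : Set (ℕ → α))
    (hIdef : I = {a : ℕ → α | Tendsto (fun n => m (a n)) atTop (𝓝 0)}) :
    IsConvIdeal I ∧
    ∃ F : ℕ → (ℕ → α) → α, IsSelective F ∧ UnifFrechet I F ∧
      ∀ k : ℕ, ∀ x ∈ I, m (F k x) < 1 / (k + 1 : ℝ) := by
  have hmono' : Monotone m := fun _ _ => hmono _ _
  obtain rfl : I = vanishingSeqs m := hIdef
  exact ⟨isConvIdeal_vanishingSeqs h0 hmono' hsub hpos hexh, smallTerm m,
    isSelective_smallTerm m, unifFrechet_smallTerm h0 hmono', fun k _ hx => smallTerm_lt hx k⟩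

theorem stmt9 [BooleanAlgebra α] (m : α → ℝ)
    (h0 : m ⊥ = 0) (h1 : m ⊤ = 1)
    (hmono : ∀ a b : α, a ≤ b → m a ≤ m b)
    (hsub : ∀ a b : α, m (a ⊔ b) ≤ m a + m b)
    (hpos : ∀ a : α, m a = 0 → a = ⊥)
    (hexh : ∀ a : ℕ → α, (∀ i j, i ≠ j → a i ⊓ a j = ⊥) →
      Tendsto (fun n => m (a n)) atTop (𝓝 0))
    (I : Set (ℕ → α))
    (hIdef : I = {a : ℕ → α | Tendsto (fun n => m (a n)) atTop (𝓝 0)}) :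
    IsConvIdeal I ∧
    ∃ F : ℕ → (ℕ → α) → α, IsSelective F ∧ UnifFrechet I F ∧
      ∀ k : ℕ, ∀ x ∈ I, m (F k x) < 1 / (k + 1 : ℝ) :=
  stmt9_general m h0 hmono hsub hpos hexh I hIdef
end

section
/- With the fragmentation C_n = B \ U_n constructed from a uniformly Fréchet convergence ideal I via the choice functions F_k, if {a_n} is a sequence with a_n ∉ C_n for each n, then {a_n} ∈ I. -/
open Filter Topology

variable {α : Type*}

/-- `Vset I F k = {a : a ≤ F k x for some x ∈ I}`. -/
def Vset [BooleanAlgebra α] (I : Set (ℕ → α)) (F : ℕ → (ℕ → α) → α) (k : ℕ) : Set α :=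
  {a | ∃ x ∈ I, a ≤ F k x}

/-- `Uset I F n = Vset 0 ∩ ... ∩ Vset n`. -/
def Uset [BooleanAlgebra α] (I : Set (ℕ → α)) (F : ℕ → (ℕ → α) → α) (n : ℕ) : Set α :=
  {a | ∀ k ≤ n, a ∈ Vset I F k}

/-- `Cset I F n = B \\ Uset I F n`. -/
def Cset [BooleanAlgebra α] (I : Set (ℕ → α)) (F : ℕ → (ℕ → α) → α) (n : ℕ) : Set α :=
  (Uset I F n)ᶜ

theorem IsConvIdeal.mem_of_le [BooleanAlgebra α] {I : Set (ℕ → α)} (hI : IsConvIdeal I)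
    {a b : ℕ → α} (ha : a ∈ I) (hba : ∀ n, b n ≤ a n) : b ∈ I :=
  hI.2.2.1 a ha b hba

theorem mem_Vset_of_notMem_Cset [BooleanAlgebra α] {I : Set (ℕ → α)}
    {F : ℕ → (ℕ → α) → α} {a : α} {n : ℕ} (ha : a ∉ Cset I F n) : a ∈ Vset I F n :=
  (not_not.mp ha : a ∈ Uset I F n) n le_rfl

theorem stmt11_general [BooleanAlgebra α]
    (I : Set (ℕ → α)) (hI : IsConvIdeal I)
    (F : ℕ → (ℕ → α) → α) (hunif : UnifFrechet I F)
    (a : ℕ → α) (ha : ∀ n, a n ∉ Cset I F n) : a ∈ I := by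
  choose x hxI hax using fun n => mem_Vset_of_notMem_Cset (ha n)
  exact hI.mem_of_le (hunif x hxI) hax

theorem stmt11 [BooleanAlgebra α]
    (I : Set (ℕ → α)) (hI : IsConvIdeal I)
    (F : ℕ → (ℕ → α) → α) (hsel : IsSelective F) (hunif : UnifFrechet I F)
    (a : ℕ → α) (ha : ∀ n, a n ∉ Cset I F n) : a ∈ I :=
  stmt11_general I hI F hunif a ha
end

section
/- With the fragmentation C_n constructed from a uniformly Fréchet convergence ideal I, no sequence belonging to I is entirely contained in any single C_n; consequently the fragmentation is σ-finite cc (every antichain in each C_n is finite). -/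
open Filter Topology

variable {α : Type*}

/-!
If a sequence `a ∈ I` had infinitely many terms outside `Vset I F k`, the subsequence of those
terms would still lie in `I`, and `F k` would pick one of them, which lies in `Vset I F k`.
So every `a ∈ I` is eventually in each `Vset I F k`, hence eventually in every `Uset I F n`:
no sequence of `I` stays inside `Cset I F n`. An infinite antichain in `Cset I F n` would
enumerate to such a sequence.
-/

theorem eventually_mem_Vset [BooleanAlgebra α] {I : Set (ℕ → α)} {F : ℕ → (ℕ → α) → α}
    (hsub : ∀ a ∈ I, ∀ φ : ℕ → ℕ, StrictMono φ → (fun n => a (φ n)) ∈ I)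
    (hsel : IsSelective F) {a : ℕ → α} (ha : a ∈ I) (k : ℕ) :
    ∀ᶠ m in atTop, a m ∈ Vset I F k := by
  rw [← Nat.cofinite_eq_atTop, eventually_cofinite]
  by_contra hinf
  set φ := Nat.nth fun m => a m ∉ Vset I F k
  obtain ⟨m, hm⟩ := hsel k fun n => a (φ n)
  exact Nat.nth_mem_of_infinite hinf m ⟨_, hsub a ha φ (Nat.nth_strictMono hinf), hm.ge⟩

theorem eventually_mem_Uset [BooleanAlgebra α] {I : Set (ℕ → α)} {F : ℕ → (ℕ → α) → α}
    (hsub : ∀ a ∈ I, ∀ φ : ℕ → ℕ, StrictMono φ → (fun n => a (φ n)) ∈ I)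
    (hsel : IsSelective F) {a : ℕ → α} (ha : a ∈ I) (n : ℕ) :
    ∀ᶠ m in atTop, a m ∈ Uset I F n :=
  (Set.finite_le_nat n).eventually_all.2 fun k _ => eventually_mem_Vset hsub hsel ha k

theorem Set.finite_of_pairwise_inf_eq_bot_of_subset [SemilatticeInf α] [OrderBot α]
    {I : Set (ℕ → α)} {C A : Set α}
    (hanti : ∀ a : ℕ → α, (∀ n, a n ≠ ⊥) → (∀ i j, i ≠ j → a i ⊓ a j = ⊥) → a ∈ I)
    (hC : ∀ a ∈ I, ∃ k, a k ∉ C) (hAC : A ⊆ C) (hbot : ⊥ ∉ A)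
    (hA : A.Pairwise fun a b => a ⊓ b = ⊥) : A.Finite := by
  by_contra hinf
  set e := Set.Infinite.natEmbedding A hinf
  have he : (fun k => (e k : α)) ∈ I :=
    hanti _ (fun k hk => hbot (hk ▸ (e k).2))
      fun i j hij => hA (e i).2 (e j).2 fun h => hij (e.injective (Subtype.ext h))
  obtain ⟨k, hk⟩ := hC _ he
  exact hk (hAC (e k).2)

theorem stmt12_general [BooleanAlgebra α]
    (I : Set (ℕ → α)) (hI : IsConvIdeal I)
    (F : ℕ → (ℕ → α) → α) (hsel : IsSelective F) :
    (∀ a ∈ I, ∀ n : ℕ, ∃ k, a k ∉ Cset I F n) ∧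
    (∀ n : ℕ, ∀ A : Set α, A ⊆ Cset I F n → (⊥ : α) ∉ A →
      A.Pairwise (fun a b => a ⊓ b = ⊥) → A.Finite) := by
  obtain ⟨-, hsub, -, -, hanti⟩ := hI
  have hC : ∀ a ∈ I, ∀ n : ℕ, ∃ k, a k ∉ Cset I F n := fun a ha n =>
    (eventually_mem_Uset hsub hsel ha n).exists.imp fun _ hU hC => hC hU
  exact ⟨hC, fun n _ hAC hbot hA =>
    Set.finite_of_pairwise_inf_eq_bot_of_subset hanti (fun a ha => hC a ha n) hAC hbot hA⟩

theorem stmt12 [BooleanAlgebra α]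
    (I : Set (ℕ → α)) (hI : IsConvIdeal I)
    (F : ℕ → (ℕ → α) → α) (hsel : IsSelective F) (hunif : UnifFrechet I F) :
    (∀ a ∈ I, ∀ n : ℕ, ∃ k, a k ∉ Cset I F n) ∧
    (∀ n : ℕ, ∀ A : Set α, A ⊆ Cset I F n → (⊥ : α) ∉ A →
      A.Pairwise (fun a b => a ⊓ b = ⊥) → A.Finite) :=
  stmt12_general I hI F hsel
end

section
/- In the construction of the submeasure from a graded fragmentation, if r, s ∈ D with r < s then V_r ⊆ V_s, and if r + s ≤ 1 then V_r ∨ V_s ⊆ V_{r+s}; consequently m is monotone and subadditive. -/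
open Filter Topology

variable {α : Type*}

/-- A fragmentation: an increasing chain of upward closed sets with union `B \\ {0}`. -/
def IsFragmentation [BooleanAlgebra α] (C : ℕ → Set α) : Prop :=
  Monotone C ∧ (∀ n, ∀ a ∈ C n, ∀ b, a ≤ b → b ∈ C n) ∧ (⋃ n, C n) = {a : α | a ≠ ⊥}

/-- The set `{x ⊔ y : x ∈ X, y ∈ Y}`. -/
def JoinSet [BooleanAlgebra α] (X Y : Set α) : Set α :=
  {c | ∃ x ∈ X, ∃ y ∈ Y, c = x ⊔ y}

/-- For a finite set `s = {n₁ < ... < n_k}` of indices, the set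
`U n₁ ∨ ... ∨ U n_k` of joins of elements chosen from the `U nᵢ`. -/
def VofS [BooleanAlgebra α] (U : ℕ → Set α) (s : Finset ℕ) : Set α :=
  {a | ∃ f : ℕ → α, (∀ i ∈ s, f i ∈ U i) ∧ a = s.sup f}

/-- `msub U a = inf {r ∈ D ∪ {1} : a ∈ V_r}` where `D` is the set of finite
dyadic sums `Σ 1/2^{nᵢ}` with `0 < n₁ < ... < n_k` and `V_r = U n₁ ∨ ... ∨ U n_k`. -/
noncomputable def msub [BooleanAlgebra α] (U : ℕ → Set α) (a : α) : ℝ :=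
  sInf ({1} ∪ {r : ℝ | ∃ s : Finset ℕ, s.Nonempty ∧ (∀ i ∈ s, 0 < i) ∧
    r = ∑ i ∈ s, (1 / 2 : ℝ) ^ i ∧ a ∈ VofS U s})

/-! Write `r ∈ D` in binary. An element of `V_r` is a join of elements of the `U n`, one for each
binary digit of `r`, so joining an element of `V_r` with one of `V_s` amounts to adding `r` and `s`
digit by digit: a carry merges two elements of `U (n + 1)` into one of `U n`, which is exactly
what gradedness allows. Hence `V_r ∨ V_s ⊆ V_{r+s}`; for `r < s`, joining with `⊥ ∈ V_{s-r}` gives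
`V_r ⊆ V_s`. Since each `V_r` is a lower set, `m` is monotone, and subadditivity of `m` follows
from `V_r ∨ V_s ⊆ V_{r+s}` by taking infima. Existence and uniqueness of finite binary expansions
are reduced to those of natural numbers by scaling with `2 ^ N`. -/

lemma Finset.le_sup_id {s : Finset ℕ} : ∀ i ∈ s, i ≤ s.sup id :=
  fun _ hi ↦ Finset.le_sup (f := id) hi

lemma Finset.image_tsub_image_tsub {s : Finset ℕ} {N : ℕ} (h : ∀ i ∈ s, i ≤ N) :
    (s.image (N - ·)).image (N - ·) = s := by
  rw [Finset.image_image]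
  exact (Finset.image_congr fun i hi ↦ Nat.sub_sub_self (h i hi)).trans Finset.image_id'

noncomputable def dyadicSum (s : Finset ℕ) : ℝ := ∑ i ∈ s, (1 / 2 : ℝ) ^ i

section dyadicSum

variable {s t : Finset ℕ} {N : ℕ}

lemma dyadicSum_nonneg (s : Finset ℕ) : 0 ≤ dyadicSum s :=
  Finset.sum_nonneg fun _ _ ↦ by positivity

lemma dyadicSum_pos (hs : s.Nonempty) : 0 < dyadicSum s :=
  Finset.sum_pos (fun _ _ ↦ by positivity) hs

lemma dyadicSum_insert {n : ℕ} (hn : n ∉ s) :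
    dyadicSum (insert n s) = (1 / 2) ^ n + dyadicSum s :=
  Finset.sum_insert hn

lemma dyadicSum_mul_two_pow (h : ∀ i ∈ s, i ≤ N) :
    dyadicSum s * 2 ^ N = ((∑ j ∈ s.image (N - ·), 2 ^ j : ℕ) : ℝ) := by
  rw [Finset.sum_image fun i hi j hj hij ↦ by have := h i hi; have := h j hj; omega]
  rw [dyadicSum, Finset.sum_mul]
  push_cast
  refine Finset.sum_congr rfl fun i hi ↦ ?_
  rw [← Nat.sub_add_cancel (h i hi), pow_add, Nat.add_sub_cancel, mul_left_comm, ← mul_pow]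
  norm_num

lemma dyadicSum_lt_one (h : ∀ i ∈ s, 0 < i) : dyadicSum s < 1 := by
  set N := s.sup id
  have hlt := Nat.geomSum_lt le_rfl (s := s.image (N - ·)) (n := N) (by
    simp only [Finset.mem_image]
    rintro _ ⟨i, hi, rfl⟩
    have := h i hi
    have := Finset.le_sup_id i hi
    omega)
  rw [← mul_lt_mul_iff_left₀ (by positivity : (0 : ℝ) < 2 ^ N), one_mul,
    dyadicSum_mul_two_pow Finset.le_sup_id]
  exact_mod_cast hlt

lemma dyadicSum_injective : Function.Injective dyadicSum := by
  intro s t hst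
  set N := (s ∪ t).sup id
  have hs : ∀ i ∈ s, i ≤ N := fun i hi ↦ Finset.le_sup_id i (Finset.mem_union_left t hi)
  have ht : ∀ i ∈ t, i ≤ N := fun i hi ↦ Finset.le_sup_id i (Finset.mem_union_right s hi)
  have h := dyadicSum_mul_two_pow hs
  rw [hst, dyadicSum_mul_two_pow ht, Nat.cast_inj] at h
  rw [← Finset.image_tsub_image_tsub hs, ← Finset.image_tsub_image_tsub ht,
    Finset.geomSum_injective le_rfl h]

lemma exists_dyadicSum_mul_two_pow_eq (s : Finset ℕ) : ∃ N k : ℕ, dyadicSum s * 2 ^ N = k :=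
  ⟨_, _, dyadicSum_mul_two_pow Finset.le_sup_id⟩

lemma exists_dyadicSum_eq {q : ℝ} {N : ℕ} {k : ℤ} (hk : q * 2 ^ N = k) (h0 : 0 ≤ q) (h1 : q < 1) :
    ∃ u : Finset ℕ, (∀ i ∈ u, 0 < i) ∧ dyadicSum u = q := by
  have h2 : (0 : ℝ) < 2 ^ N := by positivity
  lift k to ℕ using (by exact_mod_cast hk ▸ (by positivity : 0 ≤ q * 2 ^ N))
  push_cast at hk
  have hkN : k < 2 ^ N := by
    have : (k : ℝ) < 2 ^ N := by rw [← hk]; nlinarith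
    exact_mod_cast this
  set T := k.bitIndices.toFinset
  have hT : ∀ j ∈ T, j < N := fun j hj ↦ (Nat.pow_lt_pow_iff_right (by norm_num)).mp
    ((Nat.two_pow_le_of_mem_bitIndices (List.mem_toFinset.mp hj)).trans_lt hkN)
  have hu : ∀ i ∈ T.image (N - ·), i ≤ N := by simp
  refine ⟨T.image (N - ·), ?_, ?_⟩
  · simp only [Finset.mem_image]
    rintro _ ⟨j, hj, rfl⟩
    have := hT j hj
    omega
  · have := dyadicSum_mul_two_pow hu
    rw [Finset.image_tsub_image_tsub fun j hj ↦ (hT j hj).le,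
      Finset.sum_toFinset_bitIndices_two_pow] at this
    rw [← mul_left_inj' h2.ne', this, hk]

lemma exists_dyadicSum_eq_add (h : dyadicSum s + dyadicSum t < 1) :
    ∃ u : Finset ℕ, (∀ i ∈ u, 0 < i) ∧ dyadicSum u = dyadicSum s + dyadicSum t := by
  obtain ⟨M, a, ha⟩ := exists_dyadicSum_mul_two_pow_eq s
  obtain ⟨N, b, hb⟩ := exists_dyadicSum_mul_two_pow_eq t
  refine exists_dyadicSum_eq (N := M + N) (k := a * 2 ^ N + b * 2 ^ M) ?_
    (add_nonneg (dyadicSum_nonneg s) (dyadicSum_nonneg t)) h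
  push_cast
  linear_combination (2 : ℝ) ^ N * ha + (2 : ℝ) ^ M * hb

lemma exists_dyadicSum_eq_sub (hst : dyadicSum s ≤ dyadicSum t) (ht : dyadicSum t < 1) :
    ∃ u : Finset ℕ, (∀ i ∈ u, 0 < i) ∧ dyadicSum u = dyadicSum t - dyadicSum s := by
  obtain ⟨M, a, ha⟩ := exists_dyadicSum_mul_two_pow_eq s
  obtain ⟨N, b, hb⟩ := exists_dyadicSum_mul_two_pow_eq t
  refine exists_dyadicSum_eq (N := M + N) (k := b * 2 ^ M - a * 2 ^ N) ?_
    (sub_nonneg.mpr hst) (by linarith [dyadicSum_nonneg s])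
  push_cast
  linear_combination (2 : ℝ) ^ M * hb - (2 : ℝ) ^ N * ha

end dyadicSum

section VofS

open scoped SetFamily

variable [BooleanAlgebra α] {U : ℕ → Set α} {s t u : Finset ℕ}

lemma VofS_empty : VofS U ∅ = {⊥} := by
  ext a
  simp [VofS]

lemma VofS_insert {n : ℕ} (hn : n ∉ s) : VofS U (insert n s) = U n ⊻ VofS U s := by
  ext a
  constructor
  · rintro ⟨f, hf, rfl⟩
    exact Set.mem_sups.2 ⟨f n, hf n (s.mem_insert_self n), s.sup f,
      ⟨f, fun i hi ↦ hf i (Finset.mem_insert_of_mem hi), rfl⟩, Finset.sup_insert.symm⟩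
  · rintro ⟨x, hx, _, ⟨f, hf, rfl⟩, rfl⟩
    have hupd : ∀ i ∈ s, Function.update f n x i = f i := fun i hi ↦
      Function.update_of_ne (ne_of_mem_of_not_mem hi hn) _ _
    refine ⟨Function.update f n x, fun i hi ↦ ?_, ?_⟩
    · rcases Finset.mem_insert.mp hi with rfl | hi
      · rwa [Function.update_self]
      · rw [hupd i hi]
        exact hf i hi
    · rw [Finset.sup_insert, Function.update_self, Finset.sup_congr rfl hupd]

lemma bot_mem_VofS (hU : ∀ n, ⊥ ∈ U n) (s : Finset ℕ) : ⊥ ∈ VofS U s :=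
  ⟨fun _ ↦ ⊥, fun i _ ↦ hU i, Finset.sup_bot s |>.symm⟩

lemma isLowerSet_VofS (hU : ∀ n, IsLowerSet (U n)) (s : Finset ℕ) : IsLowerSet (VofS U s) := by
  rintro b a hab ⟨f, hf, rfl⟩
  refine ⟨fun i ↦ a ⊓ f i, fun i hi ↦ hU i inf_le_right (hf i hi), ?_⟩
  rw [← Finset.sup_inf_distrib_left, inf_eq_left.mpr hab]

variable (hU : ∀ n, U (n + 1) ⊻ U (n + 1) ⊆ U n)
include hU

lemma sups_VofS_subset_of_dyadicSum_eq_pow_add (m : ℕ) (hu : dyadicSum u < 1)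
    (h : dyadicSum u = (1 / 2) ^ m + dyadicSum s) : U m ⊻ VofS U s ⊆ VofS U u := by
  induction s using Finset.strongInduction generalizing m with
  | H s ih =>
  by_cases hm : m ∈ s
  · have hs : dyadicSum s = (1 / 2) ^ m + dyadicSum (s.erase m) :=
      (Finset.add_sum_erase s _ hm).symm
    have hm2 : 2 ≤ m := by
      by_contra! hm2
      have := dyadicSum_nonneg (s.erase m)
      interval_cases m <;> norm_num at h hs <;> linarith
    have hsum : dyadicSum u = (1 / 2) ^ (m - 1) + dyadicSum (s.erase m) := by
      rw [h, hs, ← add_assoc, ← two_mul, ← Nat.sub_add_cancel (by omega : 1 ≤ m)]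
      simp only [pow_succ, Nat.add_sub_cancel]
      ring
    have hcarry : U m ⊻ U m ⊆ U (m - 1) := Nat.sub_add_cancel (by omega : 1 ≤ m) ▸ hU (m - 1)
    rw [← Finset.insert_erase hm, VofS_insert (s.notMem_erase m), ← Set.sups_assoc]
    exact (Set.sups_subset_right hcarry).trans (ih _ (Finset.erase_ssubset hm) (m - 1) hsum)
  · rw [dyadicSum_injective (h.trans (dyadicSum_insert hm).symm), VofS_insert hm]

lemma sups_VofS_subset_VofS_of_dyadicSum_eq_add (hu : dyadicSum u < 1)
    (h : dyadicSum u = dyadicSum s + dyadicSum t) : VofS U s ⊻ VofS U t ⊆ VofS U u := by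
  induction t using Finset.induction_on generalizing u with
  | empty =>
    have hus : u = s := dyadicSum_injective (by simpa [dyadicSum] using h)
    simp [hus, VofS_empty, Set.sups_singleton]
  | insert n t hn ih =>
    rw [dyadicSum_insert hn] at h
    have hpow : (0 : ℝ) < (1 / 2) ^ n := by positivity
    obtain ⟨w, -, hw⟩ := exists_dyadicSum_eq_add (s := s) (t := t) (by linarith)
    rw [VofS_insert hn, Set.sups_left_comm]
    exact (Set.sups_subset_left (ih (by linarith) hw)).trans
      (sups_VofS_subset_of_dyadicSum_eq_pow_add hU n hu (by rw [h, hw]; ring))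

lemma VofS_subset_VofS_of_dyadicSum_le (hbot : ∀ n, ⊥ ∈ U n) (hst : dyadicSum s ≤ dyadicSum t)
    (ht : dyadicSum t < 1) : VofS U s ⊆ VofS U t := by
  obtain ⟨w, -, hw⟩ := exists_dyadicSum_eq_sub hst ht
  calc VofS U s ⊆ VofS U s ⊻ VofS U w := fun a ha ↦ ⟨a, ha, ⊥, bot_mem_VofS hbot w, sup_bot_eq a⟩
    _ ⊆ VofS U t := sups_VofS_subset_VofS_of_dyadicSum_eq_add hU ht (by rw [hw]; ring)

end VofS

section msub

open scoped Pointwise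

variable [BooleanAlgebra α] {U : ℕ → Set α} {a b : α} {r r' : ℝ}

def msubCandidates (U : ℕ → Set α) (a : α) : Set ℝ :=
  {1} ∪ {r : ℝ | ∃ s : Finset ℕ, s.Nonempty ∧ (∀ i ∈ s, 0 < i) ∧
    r = ∑ i ∈ s, (1 / 2 : ℝ) ^ i ∧ a ∈ VofS U s}

lemma msub_eq_sInf (U : ℕ → Set α) (a : α) : msub U a = sInf (msubCandidates U a) := rfl

lemma nonneg_of_mem_msubCandidates (hr : r ∈ msubCandidates U a) : 0 ≤ r := by
  rcases hr with rfl | ⟨s, -, -, rfl, -⟩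
  exacts [zero_le_one, dyadicSum_nonneg s]

lemma msubCandidates_nonempty (U : ℕ → Set α) (a : α) : (msubCandidates U a).Nonempty :=
  ⟨1, Or.inl rfl⟩

lemma bddBelow_msubCandidates (U : ℕ → Set α) (a : α) : BddBelow (msubCandidates U a) :=
  ⟨0, fun _ ↦ nonneg_of_mem_msubCandidates⟩

lemma msub_le_of_mem (hr : r ∈ msubCandidates U a) : msub U a ≤ r :=
  csInf_le (bddBelow_msubCandidates U a) hr

lemma msubCandidates_anti (hU : ∀ n, IsLowerSet (U n)) (hab : a ≤ b) :
    msubCandidates U b ⊆ msubCandidates U a := by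
  rintro r (hr | ⟨s, hs, hpos, rfl, hb⟩)
  exacts [Or.inl hr, Or.inr ⟨s, hs, hpos, rfl, isLowerSet_VofS hU s hab hb⟩]

lemma msub_mono (hU : ∀ n, IsLowerSet (U n)) : Monotone (msub U) := fun a _ hab ↦
  csInf_le_csInf (bddBelow_msubCandidates U a) (msubCandidates_nonempty U _)
    (msubCandidates_anti hU hab)

open scoped SetFamily in
lemma msub_sup_le_add_of_mem (hU : ∀ n, U (n + 1) ⊻ U (n + 1) ⊆ U n)
    (hr : r ∈ msubCandidates U a) (hr' : r' ∈ msubCandidates U b) :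
    msub U (a ⊔ b) ≤ r + r' := by
  have h0 := nonneg_of_mem_msubCandidates hr
  have h0' := nonneg_of_mem_msubCandidates hr'
  rcases le_or_gt 1 (r + r') with h1 | h1
  · exact (msub_le_of_mem (Or.inl rfl)).trans h1
  obtain ⟨s, hs, -, rfl, ha⟩ := hr.resolve_left (by rintro rfl; linarith)
  obtain ⟨t, -, -, rfl, hb⟩ := hr'.resolve_left (by rintro rfl; linarith)
  obtain ⟨u, hupos, hu⟩ := exists_dyadicSum_eq_add h1
  have hune : u.Nonempty := Finset.nonempty_of_sum_ne_zero <|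
    show dyadicSum u ≠ 0 from hu ▸ (add_pos_of_pos_of_nonneg (dyadicSum_pos hs) h0').ne'
  have hab : a ⊔ b ∈ VofS U u :=
    sups_VofS_subset_VofS_of_dyadicSum_eq_add hU (hu ▸ h1) hu ⟨a, ha, b, hb, rfl⟩
  exact (msub_le_of_mem (Or.inr ⟨u, hune, hupos, rfl, hab⟩)).trans_eq hu

open scoped SetFamily in
lemma msub_sup_le (hU : ∀ n, U (n + 1) ⊻ U (n + 1) ⊆ U n) (a b : α) :
    msub U (a ⊔ b) ≤ msub U a + msub U b := by
  rw [msub_eq_sInf U a, msub_eq_sInf U b, ← csInf_add (msubCandidates_nonempty U a)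
    (bddBelow_msubCandidates U a) (msubCandidates_nonempty U b) (bddBelow_msubCandidates U b)]
  refine le_csInf ((msubCandidates_nonempty U a).add (msubCandidates_nonempty U b)) ?_
  rintro _ ⟨r, hr, r', hr', rfl⟩
  exact msub_sup_le_add_of_mem hU hr hr'

end msub

section fragmentation

open scoped SetFamily

variable [BooleanAlgebra α] {C : ℕ → Set α}

lemma IsFragmentation.bot_notMem (hC : IsFragmentation C) (n : ℕ) : ⊥ ∉ C n := fun h ↦
  (hC.2.2 ▸ Set.mem_iUnion_of_mem n h : (⊥ : α) ∈ {a : α | a ≠ ⊥}) rfl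

lemma IsFragmentation.isUpperSet (hC : IsFragmentation C) (n : ℕ) : IsUpperSet (C n) :=
  fun _ b hab ha ↦ hC.2.1 n _ ha b hab

lemma compl_sups_compl_subset_of_graded
    (hgraded : ∀ n : ℕ, ∀ a b : α, a ⊔ b ∈ C n → a ∈ C (n + 1) ∨ b ∈ C (n + 1)) (n : ℕ) :
    (C (n + 1))ᶜ ⊻ (C (n + 1))ᶜ ⊆ (C n)ᶜ :=
  Set.sups_subset_iff.2 fun _ ha _ hb h ↦ (hgraded n _ _ h).elim ha hb

end fragmentation

theorem stmt16_general [BooleanAlgebra α] (C U : ℕ → Set α)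
    (hfrag : IsFragmentation C)
    (hgraded : ∀ n : ℕ, ∀ a b : α, a ⊔ b ∈ C n → a ∈ C (n + 1) ∨ b ∈ C (n + 1))
    (hU : ∀ n, U n = (C n)ᶜ) :
    (∀ s t : Finset ℕ, s.Nonempty → t.Nonempty →
      (∀ i ∈ s, 0 < i) → (∀ i ∈ t, 0 < i) →
      (∑ i ∈ s, (1 / 2 : ℝ) ^ i) < (∑ i ∈ t, (1 / 2 : ℝ) ^ i) →
      VofS U s ⊆ VofS U t) ∧
    (∀ s t u : Finset ℕ, s.Nonempty → t.Nonempty → u.Nonempty →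
      (∀ i ∈ s, 0 < i) → (∀ i ∈ t, 0 < i) → (∀ i ∈ u, 0 < i) →
      (∑ i ∈ u, (1 / 2 : ℝ) ^ i) = (∑ i ∈ s, (1 / 2 : ℝ) ^ i) + ∑ i ∈ t, (1 / 2 : ℝ) ^ i →
      (∑ i ∈ s, (1 / 2 : ℝ) ^ i) + (∑ i ∈ t, (1 / 2 : ℝ) ^ i) ≤ 1 →
      JoinSet (VofS U s) (VofS U t) ⊆ VofS U u) ∧
    (∀ a b : α, a ≤ b → msub U a ≤ msub U b) ∧
    (∀ a b : α, msub U (a ⊔ b) ≤ msub U a + msub U b) := by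
  obtain rfl : U = fun n ↦ (C n)ᶜ := funext hU
  have hsups := compl_sups_compl_subset_of_graded hgraded
  refine ⟨fun s t _ _ _ ht hst ↦ ?_, fun s t u _ _ _ _ _ hu h _ ↦ ?_,
    msub_mono fun n ↦ (hfrag.isUpperSet n).compl, msub_sup_le hsups⟩
  · exact VofS_subset_VofS_of_dyadicSum_le hsups hfrag.bot_notMem hst.le (dyadicSum_lt_one ht)
  · rintro _ ⟨x, hx, y, hy, rfl⟩
    exact sups_VofS_subset_VofS_of_dyadicSum_eq_add hsups (dyadicSum_lt_one hu) h
      ⟨x, hx, y, hy, rfl⟩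

theorem stmt16 [BooleanAlgebra α] (C U : ℕ → Set α)
    (hC0 : C 0 = ∅) (hfrag : IsFragmentation C)
    (hgraded : ∀ n : ℕ, ∀ a b : α, a ⊔ b ∈ C n → a ∈ C (n + 1) ∨ b ∈ C (n + 1))
    (hU : ∀ n, U n = (C n)ᶜ) :
    (∀ s t : Finset ℕ, s.Nonempty → t.Nonempty →
      (∀ i ∈ s, 0 < i) → (∀ i ∈ t, 0 < i) →
      (∑ i ∈ s, (1 / 2 : ℝ) ^ i) < (∑ i ∈ t, (1 / 2 : ℝ) ^ i) →
      VofS U s ⊆ VofS U t) ∧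
    (∀ s t u : Finset ℕ, s.Nonempty → t.Nonempty → u.Nonempty →
      (∀ i ∈ s, 0 < i) → (∀ i ∈ t, 0 < i) → (∀ i ∈ u, 0 < i) →
      (∑ i ∈ u, (1 / 2 : ℝ) ^ i) = (∑ i ∈ s, (1 / 2 : ℝ) ^ i) + ∑ i ∈ t, (1 / 2 : ℝ) ^ i →
      (∑ i ∈ s, (1 / 2 : ℝ) ^ i) + (∑ i ∈ t, (1 / 2 : ℝ) ^ i) ≤ 1 →
      JoinSet (VofS U s) (VofS U t) ⊆ VofS U u) ∧
    (∀ a b : α, a ≤ b → msub U a ≤ msub U b) ∧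
    (∀ a b : α, msub U (a ⊔ b) ≤ msub U a + msub U b) :=
  stmt16_general C U hfrag hgraded hU
end

section
/- A Boolean algebra B carries a strictly positive exhaustive submeasure if and only if B has a uniformly Fréchet convergence ideal. -/
open Filter Topology

variable {α : Type*}

/-!
If `m` is such a submeasure, the sequences along which `m` tends to `0` form a convergence
ideal, and picking from the `k`-th sequence a term of submeasure below `2⁻¹ ^ k` makes it
uniformly Fréchet.

Conversely, the sets `V k = frechetNbhd I F k` of elements lying below some `F j x` with
`x ∈ I`, for every `j ≤ k`, behave like the balls around `⊥` of a metric. Every sequence of `I`,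
in particular every antichain, eventually enters each `V k`, since `F j` selects a term of each
of its subsequences; a sequence whose `k`-th term lies in `V k` belongs to `I` by the uniform
Fréchet property. Together these give, for each `k`, a `j` such that joins of three elements of
`V j` lie in `V k`. Along a subsequence of the `V k`, the metrization construction (the infimum
of `∑ 2⁻¹ ^ kᵢ` over finite covers by elements `aᵢ ∈ V kᵢ`) yields a submeasure that is at most
`2⁻¹ ^ k` on `V k` and at least `2⁻¹ ^ k` off it; normalised, it is the required one.
-/

structure IsStrictlyPositiveExhaustiveSubmeasure [Lattice α] [BoundedOrder α] (m : α → ℝ) :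
    Prop where
  map_bot : m ⊥ = 0
  map_top : m ⊤ = 1
  mono : Monotone m
  map_sup_le (a b : α) : m (a ⊔ b) ≤ m a + m b
  eq_bot_of_eq_zero (a : α) : m a = 0 → a = ⊥
  tendsto_zero (a : ℕ → α) : (∀ i j, i ≠ j → a i ⊓ a j = ⊥) →
    Tendsto (fun n => m (a n)) atTop (𝓝 0)

namespace IsStrictlyPositiveExhaustiveSubmeasure

variable [Lattice α] [BoundedOrder α] {m : α → ℝ}

theorem nonneg (hm : IsStrictlyPositiveExhaustiveSubmeasure m) (a : α) : 0 ≤ m a :=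
  hm.map_bot ▸ hm.mono bot_le

theorem div_map_top (h_bot : m ⊥ = 0) (h_top : 0 < m ⊤) (h_mono : Monotone m)
    (h_sup : ∀ a b, m (a ⊔ b) ≤ m a + m b) (h_pos : ∀ a, a ≠ ⊥ → 0 < m a)
    (h_exh : ∀ a : ℕ → α, (∀ i j, i ≠ j → a i ⊓ a j = ⊥) →
      Tendsto (fun n => m (a n)) atTop (𝓝 0)) :
    IsStrictlyPositiveExhaustiveSubmeasure (fun a => m a / m ⊤) where
  map_bot := by simp [h_bot]
  map_top := div_self h_top.ne'
  mono _ _ hab := div_le_div_of_nonneg_right (h_mono hab) h_top.le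
  map_sup_le a b := by
    rw [← add_div]
    exact div_le_div_of_nonneg_right (h_sup a b) h_top.le
  eq_bot_of_eq_zero a ha := by
    by_contra hne
    exact (div_pos (h_pos a hne) h_top).ne' ha
  tendsto_zero a ha := by simpa using (h_exh a ha).div_const (m ⊤)

end IsStrictlyPositiveExhaustiveSubmeasure

section Forward

variable {m : α → ℝ}

def nullSeqs (m : α → ℝ) : Set (ℕ → α) :=
  {x | Tendsto (fun n => m (x n)) atTop (𝓝 0)}

open Classical in
noncomputable def smallTermChoice (m : α → ℝ) (k : ℕ) (x : ℕ → α) : α :=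
  x (if h : ∃ n, m (x n) < 2⁻¹ ^ k then h.choose else 0)

theorem smallTermChoice_lt {k : ℕ} {x : ℕ → α} (h : ∃ n, m (x n) < 2⁻¹ ^ k) :
    m (smallTermChoice m k x) < 2⁻¹ ^ k := by
  rw [smallTermChoice, dif_pos h]
  exact h.choose_spec

variable [BooleanAlgebra α]

theorem isSelective_smallTermChoice : IsSelective (smallTermChoice m) :=
  fun _ _ => ⟨_, rfl⟩

theorem mem_nullSeqs_of_le (hm : IsStrictlyPositiveExhaustiveSubmeasure m) {x y : ℕ → α}
    (hx : x ∈ nullSeqs m) (hyx : ∀ n, m (y n) ≤ m (x n)) : y ∈ nullSeqs m :=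
  tendsto_of_tendsto_of_tendsto_of_le_of_le tendsto_const_nhds hx (fun _ => hm.nonneg _) hyx

theorem isConvIdeal_nullSeqs (hm : IsStrictlyPositiveExhaustiveSubmeasure m) :
    IsConvIdeal (nullSeqs m) := by
  refine ⟨?bound, ?subseq, ?minor, ?sup, fun x _ hx => hm.tendsto_zero x hx⟩
  case bound =>
    intro x hx b hb
    exact hm.eq_bot_of_eq_zero b <| le_antisymm
      (ge_of_tendsto' hx fun n => hm.mono (hb n)) (hm.nonneg b)
  case subseq => exact fun x hx φ hφ => hx.comp hφ.tendsto_atTop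
  case minor => exact fun x hx y hyx =>
    mem_nullSeqs_of_le hm hx fun n => hm.mono (hyx n)
  case sup =>
    intro x hx y hy
    have hxy : Tendsto (fun n => m (x n) + m (y n)) atTop (𝓝 0) := by
      simpa using hx.add hy
    exact tendsto_of_tendsto_of_tendsto_of_le_of_le tendsto_const_nhds hxy
      (fun _ => hm.nonneg _) fun _ => hm.map_sup_le _ _

theorem unifFrechet_nullSeqs (hm : IsStrictlyPositiveExhaustiveSubmeasure m) :
    UnifFrechet (nullSeqs m) (smallTermChoice m) := by
  intro x hx
  have hsmall (k : ℕ) : m (smallTermChoice m k (x k)) < 2⁻¹ ^ k :=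
    smallTermChoice_lt ((hx k).eventually_lt_const (by positivity)).exists
  exact tendsto_of_tendsto_of_tendsto_of_le_of_le tendsto_const_nhds
    (tendsto_pow_atTop_nhds_zero_of_lt_one (by norm_num) (by norm_num))
    (fun _ => hm.nonneg _) fun k => (hsmall k).le

end Forward

section Antichain

variable [BooleanAlgebra α]

theorem StrictAnti.sdiff_succ_ne_bot {c : ℕ → α} (hc : StrictAnti c) (n : ℕ) :
    c n \ c (n + 1) ≠ ⊥ :=
  fun h => (hc (Nat.lt_succ_self n)).not_ge (sdiff_eq_bot_iff.1 h)

theorem Antitone.sdiff_succ_inf_sdiff_succ {c : ℕ → α} (hc : Antitone c) {i j : ℕ}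
    (hij : i ≠ j) :
    (c i \ c (i + 1)) ⊓ (c j \ c (j + 1)) = ⊥ := by
  wlog hlt : i < j generalizing i j
  · rw [inf_comm]
    exact this hij.symm (hij.lt_or_gt.resolve_left hlt)
  exact disjoint_iff.1 <| disjoint_sdiff_self_left.mono_right (sdiff_le.trans (hc hlt))

theorem exists_pairwise_disjoint_ne_bot_s17 (hnt : (⊥ : α) ≠ ⊤)
    (hatomless : ∀ a : α, a ≠ ⊥ → ∃ b, b ≠ ⊥ ∧ b < a) :
    ∃ d : ℕ → α, (∀ n, d n ≠ ⊥) ∧ ∀ i j, i ≠ j → d i ⊓ d j = ⊥ := by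
  have : NoMinOrder (Set.Ioi (⊥ : α)) := ⟨fun a => by
    obtain ⟨b, hb, hba⟩ := hatomless a a.2.ne'
    exact ⟨⟨b, bot_lt_iff_ne_bot.2 hb⟩, hba⟩⟩
  obtain ⟨c, hc, -⟩ := Nat.exists_strictAnti' (⟨⊤, hnt.lt_top⟩ : Set.Ioi (⊥ : α))
  have hc' : StrictAnti fun n => (c n : α) := fun _ _ h => hc h
  exact ⟨fun n => (c n : α) \ c (n + 1), hc'.sdiff_succ_ne_bot,
    fun _ _ => hc'.antitone.sdiff_succ_inf_sdiff_succ⟩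

end Antichain

section DyadicCover

noncomputable def dyadicWeight (l : List (ℕ × α)) : ℝ :=
  (l.map fun p => (2⁻¹ : ℝ) ^ p.1).sum

@[simp] theorem dyadicWeight_nil : dyadicWeight ([] : List (ℕ × α)) = 0 := rfl

@[simp] theorem dyadicWeight_cons (p : ℕ × α) (l : List (ℕ × α)) :
    dyadicWeight (p :: l) = 2⁻¹ ^ p.1 + dyadicWeight l := by
  simp [dyadicWeight]

@[simp] theorem dyadicWeight_append (l₁ l₂ : List (ℕ × α)) :
    dyadicWeight (l₁ ++ l₂) = dyadicWeight l₁ + dyadicWeight l₂ := by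
  simp [dyadicWeight]

theorem dyadicWeight_nonneg (l : List (ℕ × α)) : 0 ≤ dyadicWeight l :=
  List.sum_nonneg fun _ hr => by
    obtain ⟨p, -, rfl⟩ := List.mem_map.1 hr
    positivity

theorem exists_eq_append_cons_dyadicWeight_lt_le_add (l : List (ℕ × α)) {c : ℝ} (hc : 0 < c)
    (hl : c ≤ dyadicWeight l) :
    ∃ A x B, l = A ++ x :: B ∧ dyadicWeight A < c ∧ c ≤ dyadicWeight A + 2⁻¹ ^ x.1 := by
  induction l generalizing c with
  | nil => simp at hl; linarith
  | cons y t ih =>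
    by_cases hy : c ≤ 2⁻¹ ^ y.1
    · exact ⟨[], y, t, rfl, by simpa using hc, by simpa using hy⟩
    · rw [dyadicWeight_cons] at hl
      obtain ⟨A, x, B, rfl, hA, hx⟩ := ih (c := c - 2⁻¹ ^ y.1) (by linarith) (by linarith)
      refine ⟨y :: A, x, B, rfl, ?_, ?_⟩ <;> rw [dyadicWeight_cons] <;> linarith

theorem exists_eq_append_cons_dyadicWeight_lt_of_lt_two_mul (l : List (ℕ × α)) (hl : l ≠ [])
    {c : ℝ} (hc : 0 < c) (hw : dyadicWeight l < 2 * c) :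
    ∃ A x B, l = A ++ x :: B ∧ dyadicWeight A < c ∧ dyadicWeight B < c := by
  by_cases hcl : c ≤ dyadicWeight l
  · obtain ⟨A, x, B, rfl, hA, hx⟩ := exists_eq_append_cons_dyadicWeight_lt_le_add l hc hcl
    refine ⟨A, x, B, rfl, hA, ?_⟩
    simp only [dyadicWeight_append, dyadicWeight_cons] at hw
    linarith
  · obtain ⟨x, t, rfl⟩ := List.exists_cons_of_ne_nil hl
    refine ⟨[], x, t, rfl, by simpa using hc, ?_⟩
    rw [dyadicWeight_cons] at hcl
    linarith [pow_pos (by norm_num : (0 : ℝ) < 2⁻¹) x.1]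

variable [SemilatticeSup α] [OrderBot α]

def listSup (l : List (ℕ × α)) : α :=
  l.foldr (fun p b => p.2 ⊔ b) ⊥

@[simp] theorem listSup_nil : listSup ([] : List (ℕ × α)) = ⊥ := rfl

@[simp] theorem listSup_cons (p : ℕ × α) (l : List (ℕ × α)) :
    listSup (p :: l) = p.2 ⊔ listSup l := rfl

@[simp] theorem listSup_append (l₁ l₂ : List (ℕ × α)) :
    listSup (l₁ ++ l₂) = listSup l₁ ⊔ listSup l₂ := by
  induction l₁ with
  | nil => simp
  | cons p t ih => simp [ih, sup_assoc]

/-- `N k` is to become the ball of radius `2⁻¹ ^ k` around `⊥` of `coverSubmeasure N`. -/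
structure IsSubmeasureBase (N : ℕ → Set α) : Prop where
  antitone : Antitone N
  bot_mem (k : ℕ) : ⊥ ∈ N k
  isLowerSet (k : ℕ) : IsLowerSet (N k)
  sup_sup_mem (k : ℕ) : ∀ a ∈ N (k + 1), ∀ b ∈ N (k + 1), ∀ c ∈ N (k + 1), a ⊔ b ⊔ c ∈ N k

/-- The weight `1` keeps the set nonempty (so that its `sInf` is not the junk value `0`) when
`a` has no cover. -/
def coverWeights (N : ℕ → Set α) (a : α) : Set ℝ :=
  insert 1 (dyadicWeight '' {l | (∀ p ∈ l, p.2 ∈ N p.1) ∧ a ≤ listSup l})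

noncomputable def coverSubmeasure (N : ℕ → Set α) (a : α) : ℝ :=
  sInf (coverWeights N a)

variable {N : ℕ → Set α}

theorem IsSubmeasureBase.listSup_mem (hN : IsSubmeasureBase N) {l : List (ℕ × α)}
    (hl : ∀ p ∈ l, p.2 ∈ N p.1) {k : ℕ} (hw : dyadicWeight l < 2⁻¹ ^ k) : listSup l ∈ N k := by
  induction hlen : l.length using Nat.strong_induction_on generalizing l k with
  | _ n ih =>
  rcases eq_or_ne l [] with rfl | hne
  · exact hN.bot_mem k
  have hk : (2⁻¹ : ℝ) ^ k = 2 * 2⁻¹ ^ (k + 1) := by rw [pow_succ]; ring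
  obtain ⟨A, x, B, rfl, hA, hB⟩ :=
    exists_eq_append_cons_dyadicWeight_lt_of_lt_two_mul l hne (by positivity) (hk ▸ hw)
  simp only [dyadicWeight_append, dyadicWeight_cons] at hw
  have hxk : k + 1 ≤ x.1 := by
    have : (2⁻¹ : ℝ) ^ x.1 < 2⁻¹ ^ k := by
      linarith [dyadicWeight_nonneg A, dyadicWeight_nonneg B]
    exact (pow_lt_pow_iff_right_of_lt_one₀ (by norm_num) (by norm_num)).1 this
  simp only [List.length_append, List.length_cons] at hlen
  rw [listSup_append, listSup_cons, ← sup_assoc]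
  exact hN.sup_sup_mem k _
    (ih A.length (by omega) (fun p hp => hl p (by simp [hp])) hA rfl) _
    (hN.antitone hxk (hl x (by simp))) _
    (ih B.length (by omega) (fun p hp => hl p (by simp [hp])) hB rfl)

theorem nonneg_of_mem_coverWeights {a : α} {r : ℝ} (hr : r ∈ coverWeights N a) : 0 ≤ r := by
  rcases hr with rfl | ⟨l, -, rfl⟩
  · exact zero_le_one
  · exact dyadicWeight_nonneg l

theorem bddBelow_coverWeights (a : α) : BddBelow (coverWeights N a) :=
  ⟨0, fun _ => nonneg_of_mem_coverWeights⟩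

theorem coverSubmeasure_nonneg (a : α) : 0 ≤ coverSubmeasure N a :=
  le_csInf (Set.insert_nonempty _ _) fun _ => nonneg_of_mem_coverWeights

theorem coverSubmeasure_le_one (a : α) : coverSubmeasure N a ≤ 1 :=
  csInf_le (bddBelow_coverWeights a) (Set.mem_insert _ _)

theorem coverSubmeasure_le_dyadicWeight {a : α} {l : List (ℕ × α)} (hl : ∀ p ∈ l, p.2 ∈ N p.1)
    (ha : a ≤ listSup l) : coverSubmeasure N a ≤ dyadicWeight l :=
  csInf_le (bddBelow_coverWeights a) (Set.mem_insert_of_mem _ ⟨l, ⟨hl, ha⟩, rfl⟩)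

theorem coverSubmeasure_le_of_mem {a : α} {k : ℕ} (ha : a ∈ N k) :
    coverSubmeasure N a ≤ 2⁻¹ ^ k := by
  simpa using coverSubmeasure_le_dyadicWeight (l := [(k, a)]) (by simpa using ha) (by simp)

theorem coverSubmeasure_mono : Monotone (coverSubmeasure N) := by
  intro a b hab
  refine le_csInf (Set.insert_nonempty _ _) ?_
  rintro r (rfl | ⟨l, ⟨hl, hbl⟩, rfl⟩)
  · exact coverSubmeasure_le_one a
  · exact coverSubmeasure_le_dyadicWeight hl (hab.trans hbl)

theorem coverSubmeasure_sup_le (a b : α) :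
    coverSubmeasure N (a ⊔ b) ≤ coverSubmeasure N a + coverSubmeasure N b := by
  have hsum : ∀ r ∈ coverWeights N a, ∀ s ∈ coverWeights N b,
      coverSubmeasure N (a ⊔ b) ≤ r + s := by
    rintro r hr s hs
    have hr0 := nonneg_of_mem_coverWeights hr
    have hs0 := nonneg_of_mem_coverWeights hs
    rcases hr with rfl | ⟨l₁, ⟨hl₁, ha⟩, rfl⟩
    · linarith [coverSubmeasure_le_one (N := N) (a ⊔ b)]
    rcases hs with rfl | ⟨l₂, ⟨hl₂, hb⟩, rfl⟩
    · linarith [coverSubmeasure_le_one (N := N) (a ⊔ b)]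
    rw [← dyadicWeight_append]
    refine coverSubmeasure_le_dyadicWeight (fun p hp => ?_) (by simpa using sup_le_sup ha hb)
    exact (List.mem_append.1 hp).elim (hl₁ p) (hl₂ p)
  have hsub : ∀ s ∈ coverWeights N b, coverSubmeasure N (a ⊔ b) - s ≤ coverSubmeasure N a :=
    fun s hs => le_csInf (Set.insert_nonempty _ _) fun r hr => by linarith [hsum r hr s hs]
  have : coverSubmeasure N (a ⊔ b) - coverSubmeasure N a ≤ coverSubmeasure N b :=
    le_csInf (Set.insert_nonempty _ _) fun s hs => by linarith [hsub s hs]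
  linarith

theorem IsSubmeasureBase.pow_le_coverSubmeasure (hN : IsSubmeasureBase N) {a : α} {k : ℕ}
    (ha : a ∉ N k) : 2⁻¹ ^ k ≤ coverSubmeasure N a := by
  refine le_csInf (Set.insert_nonempty _ _) ?_
  rintro r (rfl | ⟨l, ⟨hl, hal⟩, rfl⟩)
  · exact pow_le_one₀ (by norm_num) (by norm_num)
  · by_contra! hw
    exact ha (hN.isLowerSet k hal (hN.listSup_mem hl hw))

end DyadicCover

theorem IsSubmeasureBase.exists_isStrictlyPositiveExhaustiveSubmeasure [Lattice α]
    [BoundedOrder α] {N : ℕ → Set α} (hN : IsSubmeasureBase N) (hnt : (⊥ : α) ≠ ⊤)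
    (h_sep : ∀ a, (∀ k, a ∈ N k) → a = ⊥)
    (h_abs : ∀ k, ∀ e : ℕ → α, (∀ i j, i ≠ j → e i ⊓ e j = ⊥) → ∀ᶠ n in atTop, e n ∈ N k) :
    ∃ m : α → ℝ, IsStrictlyPositiveExhaustiveSubmeasure m := by
  have h_pow := tendsto_pow_atTop_nhds_zero_of_lt_one (r := (2⁻¹ : ℝ)) (by norm_num) (by norm_num)
  have h_pos (a : α) (ha : a ≠ ⊥) : 0 < coverSubmeasure N a := by
    obtain ⟨k, hk⟩ : ∃ k, a ∉ N k := by
      by_contra! h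
      exact ha (h_sep a h)
    exact (pow_pos (by norm_num) k).trans_le (hN.pow_le_coverSubmeasure hk)
  refine ⟨_, .div_map_top ?_ (h_pos ⊤ hnt.symm) coverSubmeasure_mono coverSubmeasure_sup_le
    h_pos ?_⟩
  · exact le_antisymm (ge_of_tendsto' h_pow fun k => coverSubmeasure_le_of_mem (hN.bot_mem k))
      (coverSubmeasure_nonneg ⊥)
  · intro e he
    refine tendsto_order.2 ⟨fun ε hε => .of_forall fun n => hε.trans_le
      (coverSubmeasure_nonneg _), fun ε hε => ?_⟩
    obtain ⟨k, hk⟩ := (h_pow.eventually_lt_const hε).exists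
    filter_upwards [h_abs k e he] with n hn
    exact (coverSubmeasure_le_of_mem hn).trans_lt hk

theorem exists_strictMono_forall_succ {Q : ℕ → ℕ → Prop} (h : ∀ k, ∀ᶠ j in atTop, Q k j) :
    ∃ g : ℕ → ℕ, StrictMono g ∧ ∀ k, Q (g k) (g (k + 1)) := by
  choose j hj using fun k => ((h k).and (eventually_gt_atTop k)).exists
  refine ⟨fun k => j^[k] 0, strictMono_nat_of_lt_succ fun k => ?_, fun k => ?_⟩
  · simpa only [Function.iterate_succ_apply'] using (hj _).2
  · simpa only [Function.iterate_succ_apply'] using (hj _).1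

section ConvergenceIdeal

variable [BooleanAlgebra α] {I : Set (ℕ → α)} {F : ℕ → (ℕ → α) → α}

def frechetNbhd (I : Set (ℕ → α)) (F : ℕ → (ℕ → α) → α) (k : ℕ) : Set α :=
  {a | ∀ j ≤ k, ∃ x ∈ I, a ≤ F j x}

theorem frechetNbhd_antitone : Antitone (frechetNbhd I F) :=
  fun _ _ hkl _ ha j hj => ha j (hj.trans hkl)

theorem isLowerSet_frechetNbhd (k : ℕ) : IsLowerSet (frechetNbhd I F k) := by
  intro a b hba ha j hj
  obtain ⟨x, hx, hax⟩ := ha j hj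
  exact ⟨x, hx, hba.trans hax⟩

theorem bot_mem_frechetNbhd (hI : I.Nonempty) (k : ℕ) : ⊥ ∈ frechetNbhd I F k :=
  fun _ _ => ⟨hI.some, hI.some_mem, bot_le⟩

theorem mem_of_forall_mem_frechetNbhd (hI : IsConvIdeal I) (hUF : UnifFrechet I F)
    {a : ℕ → α} (ha : ∀ k, a k ∈ frechetNbhd I F k) : a ∈ I := by
  choose x hx hax using fun k => ha k k le_rfl
  exact hI.2.2.1 _ (hUF x hx) a hax

theorem eventually_mem_frechetNbhd (hI : IsConvIdeal I) (hF : IsSelective F) {x : ℕ → α}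
    (hx : x ∈ I) (k : ℕ) : ∀ᶠ n in atTop, x n ∈ frechetNbhd I F k := by
  refine (eventually_all_finite (Set.finite_Iic k)).2 fun j _ => ?_
  by_contra h
  obtain ⟨ψ, hψ, hout⟩ := extraction_of_frequently_atTop (not_eventually.1 h)
  obtain ⟨n, hn⟩ := hF j fun n => x (ψ n)
  exact hout n ⟨_, hI.2.1 x hx ψ hψ, hn.ge⟩

theorem eventually_mem_frechetNbhd_of_disjoint (hI : IsConvIdeal I) (hF : IsSelective F)
    (hIne : I.Nonempty) {e : ℕ → α} (he : ∀ i j, i ≠ j → e i ⊓ e j = ⊥) (k : ℕ) :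
    ∀ᶠ n in atTop, e n ∈ frechetNbhd I F k := by
  by_contra h
  obtain ⟨ψ, hψ, hout⟩ := extraction_of_frequently_atTop (not_eventually.1 h)
  have heψ : (fun n => e (ψ n)) ∈ I := hI.2.2.2.2 _
    (fun n hn => hout n (hn ▸ bot_mem_frechetNbhd hIne k))
    fun i j hij => he _ _ (hψ.injective.ne hij)
  obtain ⟨n, hn⟩ := (eventually_mem_frechetNbhd hI hF heψ k).exists
  exact hout n hn

theorem eventually_sup_sup_mem_frechetNbhd (hI : IsConvIdeal I) (hF : IsSelective F)
    (hUF : UnifFrechet I F) (k : ℕ) :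
    ∀ᶠ j in atTop, ∀ a ∈ frechetNbhd I F j, ∀ b ∈ frechetNbhd I F j,
      ∀ c ∈ frechetNbhd I F j, a ⊔ b ⊔ c ∈ frechetNbhd I F k := by
  suffices ∃ j, ∀ a ∈ frechetNbhd I F j, ∀ b ∈ frechetNbhd I F j,
      ∀ c ∈ frechetNbhd I F j, a ⊔ b ⊔ c ∈ frechetNbhd I F k by
    obtain ⟨j, hj⟩ := this
    filter_upwards [eventually_ge_atTop j] with j' hj' a ha b hb c hc
    exact hj a (frechetNbhd_antitone hj' ha) b (frechetNbhd_antitone hj' hb) c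
      (frechetNbhd_antitone hj' hc)
  by_contra! h
  choose a ha b hb c hc hout using h
  have habc : (fun n => a n ⊔ b n ⊔ c n) ∈ I :=
    hI.2.2.2.1 _ (hI.2.2.2.1 _ (mem_of_forall_mem_frechetNbhd hI hUF ha) _
      (mem_of_forall_mem_frechetNbhd hI hUF hb)) _ (mem_of_forall_mem_frechetNbhd hI hUF hc)
  obtain ⟨n, hn⟩ := (eventually_mem_frechetNbhd hI hF habc k).exists
  exact hout n hn

theorem exists_isStrictlyPositiveExhaustiveSubmeasure_of_unifFrechet (hnt : (⊥ : α) ≠ ⊤)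
    (hIne : I.Nonempty) (hI : IsConvIdeal I) (hF : IsSelective F) (hUF : UnifFrechet I F) :
    ∃ m : α → ℝ, IsStrictlyPositiveExhaustiveSubmeasure m := by
  obtain ⟨g, hg, hg_sup⟩ :=
    exists_strictMono_forall_succ (eventually_sup_sup_mem_frechetNbhd hI hF hUF)
  have hN : IsSubmeasureBase (fun k => frechetNbhd I F (g k)) :=
    { antitone := frechetNbhd_antitone.comp_monotone hg.monotone
      bot_mem := fun k => bot_mem_frechetNbhd hIne (g k)
      isLowerSet := fun k => isLowerSet_frechetNbhd (g k)
      sup_sup_mem := hg_sup }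
  refine hN.exists_isStrictlyPositiveExhaustiveSubmeasure hnt (fun a ha => ?_)
    fun k e he => eventually_mem_frechetNbhd_of_disjoint hI hF hIne he (g k)
  have hconst : (fun _ => a) ∈ I := mem_of_forall_mem_frechetNbhd hI hUF fun k =>
    frechetNbhd_antitone (hg.le_apply (x := k)) (ha k)
  exact hI.1 _ hconst a fun _ => le_rfl

end ConvergenceIdeal

/-- A Boolean algebra carries a strictly positive exhaustive submeasure iff
it has a uniformly Fréchet convergence ideal. -/
theorem stmt17 [BooleanAlgebra α] (hnt : (⊥ : α) ≠ ⊤) (hatomless : ∀ a : α, a ≠ ⊥ → ∃ b, b ≠ ⊥ ∧ b < a) :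
    (∃ m : α → ℝ, m ⊥ = 0 ∧ m ⊤ = 1 ∧
      (∀ a b : α, a ≤ b → m a ≤ m b) ∧
      (∀ a b : α, m (a ⊔ b) ≤ m a + m b) ∧
      (∀ a : α, m a = 0 → a = ⊥) ∧
      (∀ a : ℕ → α, (∀ i j, i ≠ j → a i ⊓ a j = ⊥) →
        Tendsto (fun n => m (a n)) atTop (𝓝 0))) ↔
    (∃ I : Set (ℕ → α), ∃ F : ℕ → (ℕ → α) → α,
      IsConvIdeal I ∧ IsSelective F ∧ UnifFrechet I F) := by
  constructor
  · rintro ⟨m, h_bot, h_top, h_mono, h_sup, h_pos, h_exh⟩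
    have hm : IsStrictlyPositiveExhaustiveSubmeasure m :=
      ⟨h_bot, h_top, h_mono, h_sup, h_pos, h_exh⟩
    exact ⟨nullSeqs m, smallTermChoice m, isConvIdeal_nullSeqs hm, isSelective_smallTermChoice,
      unifFrechet_nullSeqs hm⟩
  · rintro ⟨I, F, hI, hF, hUF⟩
    obtain ⟨d, hd, hdisj⟩ := exists_pairwise_disjoint_ne_bot_s17 hnt hatomless
    obtain ⟨m, hm⟩ := exists_isStrictlyPositiveExhaustiveSubmeasure_of_unifFrechet hnt
      ⟨d, hI.2.2.2.2 d hd hdisj⟩ hI hF hUF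
    exact ⟨m, hm.map_bot, hm.map_top, hm.mono, hm.map_sup_le, hm.eq_bot_of_eq_zero,
      hm.tendsto_zero⟩
end

section
/- Let I be a uniformly Fréchet convergence ideal on B and suppose B is I-concentrated. Then the fragmentation {C_n} constructed from I is σ-bounded cc: for each k there is a bound K_k on the sizes of antichains contained in C_k. -/
open Filter Topology

variable {α : Type*}

/-!
If antichains in `Cset I F k` were unbounded, concentration would give a sequence `a ∈ I`
with every term in `Cset I F k`, so each `a n` avoids some `Vset I F j` with `j ≤ k`.
By pigeonhole one `j` serves infinitely many `n`; along that subsequence (still in `I`)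
the selector `F j` picks a term, which therefore lies in `Vset I F j`: a contradiction.
-/

theorem exists_strictMono_comp_eq_const {β : Type*} [Finite β] (g : ℕ → β) :
    ∃ (b : β) (φ : ℕ → ℕ), StrictMono φ ∧ ∀ n, g (φ n) = b := by
  obtain ⟨b, hb⟩ := Finite.exists_infinite_fiber g
  have hfreq : ∃ᶠ n in atTop, g n = b :=
    Nat.frequently_atTop_iff_infinite.2 (Set.infinite_coe_iff.1 hb)
  exact ⟨b, extraction_of_frequently_atTop hfreq⟩

section Fragmentation

variable [BooleanAlgebra α] {I : Set (ℕ → α)} {F : ℕ → (ℕ → α) → α}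

theorem IsSelective.exists_mem_Vset (hsel : IsSelective F) {x : ℕ → α} (hx : x ∈ I) (k : ℕ) :
    ∃ n, x n ∈ Vset I F k :=
  (hsel k x).imp fun _ hn => ⟨x, hx, hn.ge⟩

theorem exists_notMem_Vset_of_mem_Cset {k : ℕ} {a : α} (ha : a ∈ Cset I F k) :
    ∃ j : Fin (k + 1), a ∉ Vset I F j := by
  simp only [Cset, Uset, Set.mem_compl_iff, Set.mem_ofPred_eq, not_forall] at ha
  obtain ⟨j, hjk, hj⟩ := ha
  exact ⟨⟨j, Nat.lt_succ_of_le hjk⟩, hj⟩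

theorem exists_notMem_Cset
    (hsub : ∀ a ∈ I, ∀ φ : ℕ → ℕ, StrictMono φ → (fun n => a (φ n)) ∈ I)
    (hsel : IsSelective F) {a : ℕ → α} (ha : a ∈ I) (k : ℕ) :
    ∃ n, a n ∉ Cset I F k := by
  by_contra! haC
  choose g hg using fun n => exists_notMem_Vset_of_mem_Cset (haC n)
  obtain ⟨j, φ, hφ, hgφ⟩ := exists_strictMono_comp_eq_const g
  obtain ⟨m, hm⟩ := hsel.exists_mem_Vset (hsub a ha φ hφ) j
  exact hg (φ m) (hgφ m ▸ hm)

end Fragmentation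

theorem exists_finset_pairwise_inf_eq_bot_bot_notMem_of_unbounded [Lattice α] [OrderBot α]
    {S : Set α}
    (h : ∀ K : ℕ, ∃ t : Finset α, (↑t : Set α) ⊆ S ∧
      (↑t : Set α).Pairwise (fun a b => a ⊓ b = ⊥) ∧ K < t.card) (n : ℕ) :
    ∃ t : Finset α, (↑t : Set α) ⊆ S ∧ (↑t : Set α).Pairwise (fun a b => a ⊓ b = ⊥) ∧
      (⊥ : α) ∉ t ∧ n ≤ t.card := by
  classical
  obtain ⟨t, htS, ht, hcard⟩ := h n
  refine ⟨t.erase ⊥, fun x hx => htS (Finset.mem_of_mem_erase hx),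
    ht.mono fun x hx => Finset.mem_of_mem_erase hx, Finset.notMem_erase _ _, ?_⟩
  have := Finset.pred_card_le_card_erase (s := t) (a := ⊥)
  omega

theorem stmt18_general [BooleanAlgebra α]
    (I : Set (ℕ → α)) (hI : IsConvIdeal I)
    (F : ℕ → (ℕ → α) → α) (hsel : IsSelective F)
    (hconc : ∀ A : ℕ → Finset α,
      (∀ n, (↑(A n) : Set α).Pairwise (fun a b => a ⊓ b = ⊥)) →
      (∀ n, (⊥ : α) ∉ A n) → (∀ n, n ≤ (A n).card) →
      ∃ a : ℕ → α, (∀ n, a n ∈ A n) ∧ a ∈ I) :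
    ∀ k : ℕ, ∃ K : ℕ, ∀ t : Finset α, (↑t : Set α) ⊆ Cset I F k →
      (↑t : Set α).Pairwise (fun a b => a ⊓ b = ⊥) → t.card ≤ K := by
  intro k
  by_contra! hunbdd
  choose A hAC hA hAbot hAcard using
    exists_finset_pairwise_inf_eq_bot_bot_notMem_of_unbounded hunbdd
  obtain ⟨a, haA, haI⟩ := hconc A hA hAbot hAcard
  obtain ⟨n, hn⟩ := exists_notMem_Cset hI.2.1 hsel haI k
  exact hn (hAC n (haA n))

theorem stmt18 [BooleanAlgebra α]
    (I : Set (ℕ → α)) (hI : IsConvIdeal I)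
    (F : ℕ → (ℕ → α) → α) (hsel : IsSelective F) (hunif : UnifFrechet I F)
    (hconc : ∀ A : ℕ → Finset α,
      (∀ n, (↑(A n) : Set α).Pairwise (fun a b => a ⊓ b = ⊥)) →
      (∀ n, (⊥ : α) ∉ A n) → (∀ n, n ≤ (A n).card) →
      ∃ a : ℕ → α, (∀ n, a n ∈ A n) ∧ a ∈ I) :
    ∀ k : ℕ, ∃ K : ℕ, ∀ t : Finset α, (↑t : Set α) ⊆ Cset I F k →
      (↑t : Set α).Pairwise (fun a b => a ⊓ b = ⊥) → t.card ≤ K :=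
  stmt18_general I hI F hsel hconc
end
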